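/- Let F₃ be the free group on generators a, b, c, let F₂ be the free group on generators x, y, and let ε : F₃ → F₂ be the homomorphism with ε(a) = x, ε(b) = 1, ε(c) = y. Then for all natural numbers h and k, ε( (b⁻¹a^{−h})^{1+k} · a · (a^h c)^k · a^h · b ) = x^{1−hk} · (y x^{h})^k in F₂. -/
import Mathlib


namespace Stmt7

/-- Generators `a = ᾱ`, `b = β̄`, `c = γ̄` of the free group `F₃`. -/
def a : FreeGroup (Fin 3) := FreeGroup.of 0
def b : FreeGroup (Fin 3) := FreeGroup.of 1
def c : FreeGroup (Fin 3) := FreeGroup.of 2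

/-- Generators `x`, `y` of the free group `F₂`. -/
def x : FreeGroup (Fin 2) := FreeGroup.of 0
def y : FreeGroup (Fin 2) := FreeGroup.of 1

/-- The homomorphism `ε : F₃ → F₂` erasing all `b`'s: `a ↦ x, b ↦ 1, c ↦ y`. -/
def eps : FreeGroup (Fin 3) →* FreeGroup (Fin 2) := FreeGroup.lift ![x, 1, y]

lemma aux {G : Type*} [Group G] (u v : G) (k : ℕ) : (u * v) ^ k * u = u * (v * u) ^ k := by
  induction k with
  | zero => simp
  | succ n ih => rw [pow_succ', mul_assoc, ih, pow_succ']; simp [mul_assoc]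

/-- `ε((b⁻¹a^{−h})^{1+k} · a · (a^h c)^k · a^h · b) = x^{1−hk} · (y x^h)^k`. -/
theorem stmt7 (h k : ℕ) :
    eps ((b⁻¹ * (a ^ h)⁻¹) ^ (1 + k) * a * (a ^ h * c) ^ k * a ^ h * b) =
      x ^ ((1 : ℤ) - h * k) * (y * x ^ h) ^ k := by
  have ha : eps a = x := by simp [eps, a]
  have hb : eps b = 1 := by simp [eps, b]
  have hc : eps c = y := by simp [eps, c]
  simp only [map_mul, map_pow, map_inv, ha, hb, hc, one_mul, mul_one, inv_one]
  rw [mul_assoc _ _ (x ^ h), aux (x ^ h) y k]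
  have : x ^ ((1 : ℤ) - h * k) = ((x ^ h)⁻¹) ^ (1 + k) * x * x ^ h := by
    rw [← zpow_natCast x h, ← zpow_neg, ← zpow_natCast _ (1 + k), ← zpow_mul,
      ← zpow_add_one, ← zpow_add]
    congr 1
    push_cast
    ring
  rw [this]
  group
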